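/- Let X be a non-periodic sequence that is the image under a letter-to-letter morphism of the fixed point of a primitive substitution. Then there exist positive constants H₁, H₂, H₃ such that for every non-empty prefix u of X: every return word v on u satisfies H₁|u| ≤ |v| ≤ H₂|u|, and the number of return words on u is at most H₃. -/

import Mathlib

/-!
A fixed point `Y` of a primitive substitution `τ` is linearly recurrent: a factor of length
`ℓ` lies in two consecutive blocks `τ^m (x y)` of a level `m` whose blocks have length
`≍ ℓ`, every pair `x y` of consecutive letters lies in every block of some fixed level `r`,
so every factor of length `ℓ` occurs in every window of length `K ℓ`. This passes to the
letter-to-letter image `X`.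

If `u` occurred at two positions `p ≤ |u| / K` apart, `X` would contain a `p`-periodic
stretch of length `|u|`, which by linear recurrence contains every factor of length `p`; so
`X` would have at most `p` factors of length `p` and would be ultimately periodic by
Morse–Hedlund. Hence consecutive occurrences of `u` are between `|u| / K` and `K |u|` apart.
Every return word, followed by `u`, occurs in the prefix of length `O(|u|)`, in which the
occurrences of `u` are `|u| / K` apart, so there are boundedly many return words.
-/


namespace Cobham

open Filter

variable {A : Type*} {B : Type*}

/-- The factor `X_i X_{i+1} ... X_{i+n-1}` of the sequence `X`. -/
def word (X : ℕ → A) (i n : ℕ) : List A := (List.range n).map fun k => X (i + k)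

/-- `u` occurs in `X` at position `i`. -/
def OccursAt (X : ℕ → A) (u : List A) (i : ℕ) : Prop := word X i u.length = u

def IsFactor (X : ℕ → A) (u : List A) : Prop := ∃ i, OccursAt X u i

def IsPrefix (X : ℕ → A) (u : List A) : Prop := OccursAt X u 0

/-- Uniformly recurrent: gaps between successive occurrences of any factor are bounded. -/
def UnifRec (X : ℕ → A) : Prop :=
  ∀ u, IsFactor X u → ∃ g : ℕ, ∀ i : ℕ, ∃ j, i ≤ j ∧ j ≤ i + g ∧ OccursAt X u j

/-- Return words on `u`: factors between two successive occurrences of `u` in `X`. -/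
def ReturnWords (X : ℕ → A) (u : List A) : Set (List A) :=
  { v | ∃ i j, OccursAt X u i ∧ OccursAt X u j ∧ i < j ∧
      (∀ k, i < k → k < j → ¬ OccursAt X u k) ∧ v = word X i (j - i) }

/-- Application of a morphism to a word, by concatenation. -/
def wordApply (σ : A → List B) (w : List A) : List B := w.flatMap σ

/-- Iterate of a morphism. -/
def mPow (σ : A → List A) : ℕ → A → List A
  | 0 => fun a => [a]
  | k + 1 => fun a => wordApply σ (mPow σ k a)

def Nonerasing (σ : A → List A) : Prop := ∀ a, σ a ≠ []

/-- Primitivity: some power of the morphism maps every letter to a word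
containing every letter. -/
def Primitive (σ : A → List A) : Prop := ∃ k, 0 < k ∧ ∀ a b : A, b ∈ mPow σ k a

/-- Primitivity restricted to a set of letters. -/
def PrimitiveOn (σ : A → List A) (S : Set A) : Prop :=
  ∃ k, 0 < k ∧ ∀ a ∈ S, ∀ b ∈ S, b ∈ mPow σ k a

/-- `X` is a fixed point of `σ`: the image of every prefix of `X` is a prefix of `X`. -/
def IsFixedPt (σ : A → List A) (X : ℕ → A) : Prop :=
  ∀ n, OccursAt X (wordApply σ (word X 0 n)) 0

def UltPeriodic (X : ℕ → A) : Prop :=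
  ∃ N p : ℕ, 0 < p ∧ ∀ n, N ≤ n → X (n + p) = X n

def Periodic (X : ℕ → A) : Prop := ∃ p : ℕ, 0 < p ∧ ∀ n, X (n + p) = X n

/-- `u` occurs at position `i` inside the word `w`. -/
def WOcc (u w : List A) (i : ℕ) : Prop :=
  i + u.length ≤ w.length ∧ (w.drop i).take u.length = u

/-- `D` is the derived sequence of `X` on `u`: a sequence of return words on `u`
whose concatenation is `X`. -/
def IsDerived (X : ℕ → A) (u : List A) (D : ℕ → List A) : Prop :=
  (∀ n, D n ∈ ReturnWords X u) ∧ ∀ n, OccursAt X ((word D 0 n).flatten) 0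

/-- `τu` is the return substitution of `τ` on `u` (on the alphabet of return words):
`Θ_u ∘ τ_u = τ ∘ Θ_u`. -/
def RetSub (τ : A → List A) (X : ℕ → A) (u : List A)
    (τu : List A → List (List A)) : Prop :=
  ∀ r ∈ ReturnWords X u,
    (∀ s ∈ τu r, s ∈ ReturnWords X u) ∧ (τu r).flatten = wordApply τ r

/-- Eigenvalue of a complex matrix. -/
def IsEig {n : Type*} [Fintype n] (M : Matrix n n ℂ) (μ : ℂ) : Prop :=
  ∃ v : n → ℂ, v ≠ 0 ∧ M.mulVec v = μ • v

/-- Incidence matrix of a morphism, as a complex matrix. -/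
def incMat [Fintype A] [DecidableEq A] (σ : A → List A) : Matrix A A ℂ :=
  Matrix.of fun i j => (((σ j).count i : ℕ) : ℂ)

/-- Incidence matrix of a return substitution, indexed by the set of return words. -/
def retMat [DecidableEq A] (τu : List A → List (List A)) (S : Set (List A))
    [Fintype S] : Matrix S S ℂ :=
  Matrix.of fun i j => (((τu (j : List A)).count (i : List A) : ℕ) : ℂ)

/-- `α` is the dominant eigenvalue of the incidence matrix of `σ`. -/
def IsDomEig [Fintype A] [DecidableEq A] (σ : A → List A) (α : ℝ) : Prop :=
  IsEig (incMat σ) (α : ℂ) ∧ ∀ μ : ℂ, IsEig (incMat σ) μ → ‖μ‖ ≤ α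

/-- `X` is `α`-substitutive: the image under a letter-to-letter morphism of the
fixed point of a primitive substitution with dominant eigenvalue `α`. -/
def IsSubstitutiveWith {A : Type*} (α : ℝ) (X : ℕ → A) : Prop :=
  ∃ (C : Type) (hF : Fintype C) (hD : DecidableEq C) (σ : C → List C) (c : C)
    (Y : ℕ → C) (ψ : C → A),
    Nonerasing σ ∧ (σ c).head? = some c ∧ Primitive σ ∧
    Y 0 = c ∧ IsFixedPt σ Y ∧ (∀ n, X n = ψ (Y n)) ∧ @IsDomEig C hF hD σ α

/-- Perron number: a real algebraic integer `α ≥ 1` strictly dominating the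
absolute values of its other conjugates. -/
def IsPerron (α : ℝ) : Prop :=
  1 ≤ α ∧ IsIntegral ℤ α ∧
    ∀ β : ℂ, Polynomial.aeval β (minpoly ℤ α) = 0 → β ≠ (α : ℂ) → ‖β‖ < α


section Words

variable {X : ℕ → A}

@[simp] lemma length_word (X : ℕ → A) (i n : ℕ) : (word X i n).length = n := by
  simp [word]

lemma occursAt_word (X : ℕ → A) (i n : ℕ) : OccursAt X (word X i n) i := by
  simp [OccursAt]

lemma word_append (X : ℕ → A) (i s t : ℕ) :
    word X i (s + t) = word X i s ++ word X (i + s) t := by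
  simp only [word, List.range_add, List.map_append, List.map_map]
  congr 1
  exact List.map_congr_left fun k _ => by simp only [Function.comp, Nat.add_assoc]

lemma word_one (X : ℕ → A) (i : ℕ) : word X i 1 = [X i] := by simp [word]

lemma word_comp (φ : A → B) (X : ℕ → A) (i n : ℕ) :
    word (φ ∘ X) i n = (word X i n).map φ := by
  simp [word]

lemma word_eq_word_iff {i j n : ℕ} :
    word X i n = word X j n ↔ ∀ t < n, X (i + t) = X (j + t) := by
  simp [word, List.map_inj_left]

lemma word_add_eq_of_word_eq {i j L : ℕ} (h : word X i L = word X j L) {s n : ℕ}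
    (hsn : s + n ≤ L) : word X (i + s) n = word X (j + s) n := by
  rw [word_eq_word_iff] at h ⊢
  intro t ht
  simpa only [Nat.add_assoc] using h (s + t) (by omega)

lemma word_infix_word {q n s L : ℕ} (hsq : s ≤ q) (hqL : q + n ≤ s + L) :
    word X q n <:+: word X s L := by
  obtain ⟨r, rfl⟩ : ∃ r, L = (q - s) + (n + r) := ⟨s + L - q - n, by omega⟩
  refine ⟨word X s (q - s), word X (q + n) r, ?_⟩
  rw [word_append, word_append, Nat.add_sub_cancel' hsq, List.append_assoc]

lemma exists_occursAt_of_infix_word {u : List A} {s L : ℕ} (h : u <:+: word X s L) :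
    ∃ j, s ≤ j ∧ j + u.length ≤ s + L ∧ OccursAt X u j := by
  obtain ⟨l₁, l₂, ht⟩ := h
  have hlen : l₁.length + (u.length + l₂.length) = L := by
    simpa [Nat.add_assoc] using congrArg List.length ht
  refine ⟨s + l₁.length, by omega, by omega, ?_⟩
  rw [← hlen, word_append, word_append, List.append_assoc] at ht
  have h₁ := List.append_inj ht (by simp)
  exact (List.append_inj h₁.2 (by simp)).1.symm

end Words

section Morphisms

lemma wordApply_append (f : A → List B) (u v : List A) :
    wordApply f (u ++ v) = wordApply f u ++ wordApply f v := by
  simp [wordApply]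

@[simp] lemma wordApply_nil (f : A → List B) : wordApply f [] = [] := rfl

@[simp] lemma wordApply_singleton (f : A → List B) (a : A) : wordApply f [a] = f a := by
  simp [wordApply]

lemma wordApply_wordApply {D : Type*} (g : B → List D) (f : A → List B) (w : List A) :
    wordApply g (wordApply f w) = wordApply (fun a => wordApply g (f a)) w := by
  simp [wordApply, List.flatMap_assoc]

lemma length_le_length_wordApply {f : A → List B} {w : List A} {x : A} (hx : x ∈ w) :
    (f x).length ≤ (wordApply f w).length := by
  simpa [wordApply, List.length_flatMap] using
    List.le_sum_of_mem (List.mem_map_of_mem (f := fun x => (f x).length) hx)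

lemma length_wordApply_le {f : A → List B} {w : List A} {M : ℕ}
    (h : ∀ x ∈ w, (f x).length ≤ M) : (wordApply f w).length ≤ w.length * M := by
  simpa [wordApply, List.length_flatMap] using
    List.sum_le_card_nsmul (w.map fun x => (f x).length) M (by simpa using h)

lemma le_length_wordApply {f : A → List B} {w : List A} {M : ℕ}
    (h : ∀ x ∈ w, M ≤ (f x).length) : w.length * M ≤ (wordApply f w).length := by
  simpa [wordApply, List.length_flatMap] using
    List.card_nsmul_le_sum (w.map fun x => (f x).length) M (by simpa using h)

variable {C : Type*} {σ : C → List C}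

lemma mPow_one (σ : C → List C) (a : C) : mPow σ 1 a = σ a := by
  simp [mPow]

lemma wordApply_mPow_succ (σ : C → List C) (m : ℕ) (w : List C) :
    wordApply (mPow σ (m + 1)) w = wordApply σ (wordApply (mPow σ m) w) := by
  rw [wordApply_wordApply]
  rfl

lemma mPow_add (σ : C → List C) (m n : ℕ) (a : C) :
    mPow σ (m + n) a = wordApply (mPow σ m) (mPow σ n a) := by
  induction m with
  | zero => simp [mPow, wordApply]
  | succ m ih =>
    rw [Nat.add_right_comm, wordApply_mPow_succ, ← ih]
    rfl

lemma Primitive.nonerasing (hprim : Primitive σ) : Nonerasing σ := by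
  obtain ⟨k, hk, hmem⟩ := hprim
  intro b hb
  have := hmem b b
  rw [← Nat.sub_add_cancel hk, mPow_add, mPow_one, hb] at this
  simp at this

lemma Nonerasing.one_le_length_mPow (hne : Nonerasing σ) (m : ℕ) (a : C) :
    1 ≤ (mPow σ m a).length := by
  induction m generalizing a with
  | zero => simp [mPow]
  | succ m ih =>
    rw [mPow_add, mPow_one]
    obtain ⟨x, hx⟩ := List.exists_mem_of_ne_nil _ (hne a)
    exact (ih x).trans (length_le_length_wordApply hx)

lemma mPow_infix_mPow_of_mem {x a : C} {k : ℕ} (hx : x ∈ mPow σ k a) (m : ℕ) :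
    mPow σ m x <:+: mPow σ (m + k) a := by
  rw [mPow_add]
  exact List.infix_flatMap_of_mem hx _

end Morphisms

section Blocks

variable {C : Type*} {τ : C → List C} {Y : ℕ → C}

lemma IsFixedPt.occursAt_wordApply (hfix : IsFixedPt τ Y) {w : List C} (hw : OccursAt Y w 0) :
    OccursAt Y (wordApply τ w) 0 := by
  have := hfix w.length
  rwa [hw] at this

lemma IsFixedPt.occursAt_wordApply_mPow (hfix : IsFixedPt τ Y) (m n : ℕ) :
    OccursAt Y (wordApply (mPow τ m) (word Y 0 n)) 0 := by
  induction m with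
  | zero => simpa [mPow, wordApply] using occursAt_word Y 0 n
  | succ m ih => rw [wordApply_mPow_succ]; exact hfix.occursAt_wordApply ih

/-- `Y` is the concatenation of the blocks `τ^m (Y n)`; this is the position where the
`n`-th of them starts. -/
def blockPos (τ : C → List C) (Y : ℕ → C) (m n : ℕ) : ℕ :=
  (wordApply (mPow τ m) (word Y 0 n)).length

@[simp] lemma blockPos_zero (m : ℕ) : blockPos τ Y m 0 = 0 := by
  simp [blockPos, word]

lemma blockPos_add (m n d : ℕ) :
    blockPos τ Y m (n + d) = blockPos τ Y m n + (wordApply (mPow τ m) (word Y n d)).length := by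
  simp [blockPos, word_append, wordApply_append]

lemma IsFixedPt.occursAt_blockPos (hfix : IsFixedPt τ Y) (m n d : ℕ) :
    OccursAt Y (wordApply (mPow τ m) (word Y n d)) (blockPos τ Y m n) := by
  have h := hfix.occursAt_wordApply_mPow m (n + d)
  rw [OccursAt, ← blockPos, blockPos_add, word_append, word_append, wordApply_append,
    Nat.zero_add, Nat.zero_add] at h
  have hn : word Y 0 (blockPos τ Y m n) = wordApply (mPow τ m) (word Y 0 n) :=
    hfix.occursAt_wordApply_mPow m n
  rw [hn] at h
  exact (List.append_inj h (by simp)).2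

lemma IsFixedPt.occursAt_mPow_blockPos (hfix : IsFixedPt τ Y) (m n : ℕ) :
    OccursAt Y (mPow τ m (Y n)) (blockPos τ Y m n) := by
  simpa [word_one] using hfix.occursAt_blockPos m n 1

lemma blockPos_succ (m n : ℕ) :
    blockPos τ Y m (n + 1) = blockPos τ Y m n + (mPow τ m (Y n)).length := by
  simp [blockPos_add, word_one]

lemma Nonerasing.exists_blockPos_le_lt (hne : Nonerasing τ) (m q : ℕ) :
    ∃ n, blockPos τ Y m n ≤ q ∧ q < blockPos τ Y m (n + 1) := by
  induction q with
  | zero =>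
    have := hne.one_le_length_mPow m (Y 0)
    exact ⟨0, by simp, by simp [blockPos_succ]; omega⟩
  | succ q ih =>
    obtain ⟨n, hn, hqn⟩ := ih
    by_cases h : q + 1 < blockPos τ Y m (n + 1)
    · exact ⟨n, by omega, h⟩
    · have := hne.one_le_length_mPow m (Y (n + 1))
      exact ⟨n + 1, by omega, by rw [blockPos_succ (n := n + 1)]; omega⟩

end Blocks

section Lengths

variable {C : Type*} [Fintype C] {σ : C → List C}

noncomputable def maxLen (σ : C → List C) (m : ℕ) : ℕ :=
  Finset.univ.sup fun c => (mPow σ m c).length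

noncomputable def minLen [Nonempty C] (σ : C → List C) (m : ℕ) : ℕ :=
  Finset.univ.inf' Finset.univ_nonempty fun c => (mPow σ m c).length

lemma length_mPow_le_maxLen (m : ℕ) (c : C) : (mPow σ m c).length ≤ maxLen σ m :=
  Finset.le_sup (f := fun c => (mPow σ m c).length) (Finset.mem_univ c)

lemma minLen_le_length_mPow [Nonempty C] (m : ℕ) (c : C) : minLen σ m ≤ (mPow σ m c).length :=
  Finset.inf'_le _ (Finset.mem_univ c)

lemma maxLen_le_iff {m n : ℕ} : maxLen σ m ≤ n ↔ ∀ c, (mPow σ m c).length ≤ n := by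
  simp [maxLen]

lemma le_minLen_iff [Nonempty C] {m n : ℕ} : n ≤ minLen σ m ↔ ∀ c, n ≤ (mPow σ m c).length := by
  simp [minLen]

lemma maxLen_add_le (i j : ℕ) : maxLen σ (i + j) ≤ maxLen σ i * maxLen σ j :=
  maxLen_le_iff.2 fun c => by
    rw [mPow_add, Nat.mul_comm]
    exact (length_wordApply_le fun x _ => length_mPow_le_maxLen i x).trans
      (Nat.mul_le_mul_right _ (length_mPow_le_maxLen j c))

lemma maxLen_le_pow (i : ℕ) : maxLen σ i ≤ maxLen σ 1 ^ i := by
  induction i with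
  | zero => exact maxLen_le_iff.2 fun c => by simp [mPow]
  | succ i ih =>
    calc maxLen σ (i + 1) ≤ maxLen σ i * maxLen σ 1 := maxLen_add_le i 1
      _ ≤ maxLen σ 1 ^ i * maxLen σ 1 := Nat.mul_le_mul_right _ ih

lemma maxLen_le_minLen_add [Nonempty C] {k : ℕ} (hk : ∀ a b : C, b ∈ mPow σ k a) (j : ℕ) :
    maxLen σ j ≤ minLen σ (j + k) :=
  maxLen_le_iff.2 fun d => le_minLen_iff.2 fun c => by
    rw [mPow_add]
    exact length_le_length_wordApply (hk c d)

lemma two_mul_minLen_le [Nontrivial C] {k : ℕ} (hk : ∀ a b : C, b ∈ mPow σ k a) (j : ℕ) :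
    2 * minLen σ j ≤ minLen σ (j + k) := by
  classical
  refine le_minLen_iff.2 fun c => ?_
  have hcard : 2 ≤ (mPow σ k c).length :=
    calc 2 ≤ Fintype.card C := Fintype.one_lt_card
      _ ≤ (mPow σ k c).toFinset.card :=
        Finset.card_le_card fun b _ => List.mem_toFinset.2 (hk c b)
      _ ≤ (mPow σ k c).length := List.toFinset_card_le _
  rw [mPow_add]
  exact (Nat.mul_le_mul_right _ hcard).trans
    (le_length_wordApply fun x _ => minLen_le_length_mPow j x)

lemma exists_le_minLen [Nontrivial C] {k : ℕ} (hk : ∀ a b : C, b ∈ mPow σ k a) (ℓ : ℕ) :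
    ∃ m, ℓ ≤ minLen σ m := by
  have hpow : ∀ t, 2 ^ t ≤ minLen σ (t * k) := fun t => by
    induction t with
    | zero => exact le_minLen_iff.2 fun c => by simp [mPow]
    | succ t ih =>
      rw [Nat.succ_mul, pow_succ']
      exact (Nat.mul_le_mul_left 2 ih).trans (two_mul_minLen_le hk _)
  exact ⟨ℓ * k, (Nat.lt_two_pow_self).le.trans (hpow ℓ)⟩

/-- Take the first level whose blocks have length `≥ ℓ`: one level earlier they were shorter
than `ℓ`, and primitivity bounds `maxLen` at a level by `minLen` `k` levels later. -/
lemma exists_level [Nontrivial C] (hne : Nonerasing σ) {k : ℕ} (hk : ∀ a b : C, b ∈ mPow σ k a)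
    {ℓ : ℕ} (hℓ : 0 < ℓ) :
    ∃ m, ℓ ≤ minLen σ m ∧ maxLen σ m ≤ maxLen σ 1 ^ (k + 1) * ℓ := by
  classical
  have hex := exists_le_minLen hk ℓ
  refine ⟨Nat.find hex, Nat.find_spec hex, ?_⟩
  have h1 : 1 ≤ maxLen σ 1 := (hne.one_le_length_mPow 1 (Classical.arbitrary C)).trans
    (length_mPow_le_maxLen 1 _)
  by_cases hm : Nat.find hex ≤ k
  · calc maxLen σ (Nat.find hex) ≤ maxLen σ 1 ^ (Nat.find hex) := maxLen_le_pow _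
      _ ≤ maxLen σ 1 ^ (k + 1) := Nat.pow_le_pow_right h1 (by omega)
      _ ≤ maxLen σ 1 ^ (k + 1) * ℓ := Nat.le_mul_of_pos_right _ hℓ
  · obtain ⟨j, hj⟩ : ∃ j, Nat.find hex = (k + 1) + j := ⟨Nat.find hex - (k + 1), by omega⟩
    have hprev : minLen σ (j + k) < ℓ :=
      not_le.1 (Nat.find_min hex (show j + k < Nat.find hex by omega))
    rw [hj]
    calc maxLen σ ((k + 1) + j) ≤ maxLen σ (k + 1) * maxLen σ j := maxLen_add_le _ _
      _ ≤ maxLen σ 1 ^ (k + 1) * ℓ :=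
        Nat.mul_le_mul (maxLen_le_pow _) ((maxLen_le_minLen_add hk j).trans hprev.le)

end Lengths

section LinearRecurrence

def factorSet (X : ℕ → A) (n : ℕ) : Set (List A) := Set.range fun q => word X q n

lemma finite_factorSet {X : ℕ → A} (hfin : (Set.range X).Finite) (n : ℕ) :
    (factorSet X n).Finite := by
  have := hfin.to_subtype
  refine ((List.finite_length_eq (Set.range X) n).image (List.map Subtype.val)).subset ?_
  rintro _ ⟨q, rfl⟩
  refine ⟨word (Set.rangeFactorization X) q n, by simp, ?_⟩
  rw [← word_comp, Set.coe_comp_rangeFactorization]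

lemma exists_bound_word_eq {X : ℕ → A} {L : ℕ} (hfin : (factorSet X L).Finite) :
    ∃ N, ∀ n, ∃ n' ≤ N, word X n' L = word X n L := by
  choose! f hf using fun w (hw : w ∈ factorSet X L) => hw
  obtain ⟨N, hN⟩ := Set.Finite.bddAbove (hfin.image f)
  exact ⟨N, fun n => ⟨f (word X n L), hN ⟨_, ⟨n, rfl⟩, rfl⟩, hf _ ⟨n, rfl⟩⟩⟩

def IsLinearlyRecurrent (K : ℕ) (X : ℕ → A) : Prop :=
  ∀ q ℓ, 0 < ℓ → ∀ i, ∃ j, i ≤ j ∧ j + ℓ ≤ i + K * ℓ ∧ word X j ℓ = word X q ℓ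

lemma IsLinearlyRecurrent.one_le {K : ℕ} {X : ℕ → A} (hLR : IsLinearlyRecurrent K X) :
    1 ≤ K := by
  obtain ⟨j, -, hj, -⟩ := hLR 0 1 one_pos 0
  omega

lemma IsLinearlyRecurrent.comp {K : ℕ} {X : ℕ → A} (hLR : IsLinearlyRecurrent K X)
    (φ : A → B) : IsLinearlyRecurrent K (φ ∘ X) := fun q ℓ hℓ i => by
  obtain ⟨j, hij, hj, hw⟩ := hLR q ℓ hℓ i
  exact ⟨j, hij, hj, by rw [word_comp, word_comp, hw]⟩

variable {C : Type*} [Fintype C] {τ : C → List C} {Y : ℕ → C}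

lemma IsFixedPt.exists_infix_mPow [Nontrivial C] (hfix : IsFixedPt τ Y) (hprim : Primitive τ) :
    ∃ r, ∀ n c, word Y n 2 <:+: mPow τ r c := by
  obtain ⟨N, hN⟩ := exists_bound_word_eq (finite_factorSet (Set.range Y).toFinite 2)
  obtain ⟨k, -, hk⟩ := hprim
  obtain ⟨s, hs⟩ := exists_le_minLen hk (N + 2)
  refine ⟨s + k, fun n c => ?_⟩
  obtain ⟨n', hn'N, hn'⟩ := hN n
  have hpre : word Y 0 (mPow τ s (Y 0)).length = mPow τ s (Y 0) := by
    simpa [OccursAt] using hfix.occursAt_mPow_blockPos s 0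
  have hlen := hs.trans (minLen_le_length_mPow s (Y 0))
  rw [← hn']
  refine List.IsInfix.trans ?_ (mPow_infix_mPow_of_mem (hk c (Y 0)) s)
  rw [← hpre]
  exact word_infix_word (Nat.zero_le _) (by omega)

lemma IsFixedPt.exists_infix_wordApply_word_two [Nonempty C] (hfix : IsFixedPt τ Y)
    (hne : Nonerasing τ) {m ℓ : ℕ} (hℓ : ℓ ≤ minLen τ m) (q : ℕ) :
    ∃ n, word Y q ℓ <:+: wordApply (mPow τ m) (word Y n 2) := by
  obtain ⟨n, hn, hqn⟩ := hne.exists_blockPos_le_lt (Y := Y) m q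
  refine ⟨n, ?_⟩
  have hocc : word Y (blockPos τ Y m n) _ = _ := hfix.occursAt_blockPos m n 2
  rw [← hocc]
  refine word_infix_word hn ?_
  have h₁ := blockPos_add (τ := τ) (Y := Y) m n 2
  have h₂ : blockPos τ Y m (n + 2) = _ := blockPos_succ m (n + 1)
  have h₃ := hℓ.trans (minLen_le_length_mPow m (Y (n + 1)))
  omega

lemma Nonerasing.exists_block_within (hne : Nonerasing τ) (m i : ℕ) :
    ∃ n, i ≤ blockPos τ Y m n ∧
      blockPos τ Y m n + (mPow τ m (Y n)).length ≤ i + 2 * maxLen τ m := by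
  obtain ⟨n, hn, hin⟩ := hne.exists_blockPos_le_lt (Y := Y) m i
  have h₁ := blockPos_succ (τ := τ) (Y := Y) m n
  have h₂ := length_mPow_le_maxLen (σ := τ) m (Y n)
  have h₃ := length_mPow_le_maxLen (σ := τ) m (Y (n + 1))
  exact ⟨n + 1, hin.le, by omega⟩

theorem IsFixedPt.exists_isLinearlyRecurrent (hfix : IsFixedPt τ Y) (hprim : Primitive τ) :
    ∃ K, IsLinearlyRecurrent K Y := by
  rcases subsingleton_or_nontrivial C with hC | hC
  · exact ⟨1, fun q ℓ _ i =>
      ⟨i, le_rfl, by omega, word_eq_word_iff.2 fun _ _ => Subsingleton.elim _ _⟩⟩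
  have hne := hprim.nonerasing
  obtain ⟨r, hr⟩ := hfix.exists_infix_mPow hprim
  obtain ⟨k, -, hk⟩ := hprim
  refine ⟨2 * maxLen τ r * maxLen τ 1 ^ (k + 1), fun q ℓ hℓ i => ?_⟩
  obtain ⟨m, hmin, hmax⟩ := exists_level hne hk hℓ
  obtain ⟨n, hn⟩ := hfix.exists_infix_wordApply_word_two hne hmin q
  obtain ⟨b, hib, hb⟩ := hne.exists_block_within (Y := Y) (m + r) i
  have hblock : word Y (blockPos τ Y (m + r) b) _ = _ := hfix.occursAt_mPow_blockPos (m + r) b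
  have hinfix : word Y q ℓ <:+: word Y (blockPos τ Y (m + r) b) (mPow τ (m + r) (Y b)).length := by
    rw [hblock, mPow_add]
    exact hn.trans ((hr n (Y b)).flatMap _)
  obtain ⟨j, hij, hj, hocc⟩ := exists_occursAt_of_infix_word hinfix
  rw [length_word] at hj
  rw [OccursAt, length_word] at hocc
  have hlen : 2 * maxLen τ (m + r) ≤ 2 * maxLen τ r * maxLen τ 1 ^ (k + 1) * ℓ :=
    calc 2 * maxLen τ (m + r) ≤ 2 * (maxLen τ m * maxLen τ r) :=
          Nat.mul_le_mul_left 2 (maxLen_add_le m r)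
      _ ≤ 2 * (maxLen τ 1 ^ (k + 1) * ℓ * maxLen τ r) :=
          Nat.mul_le_mul_left 2 (Nat.mul_le_mul_right _ hmax)
      _ = 2 * maxLen τ r * maxLen τ 1 ^ (k + 1) * ℓ := by ring
  exact ⟨j, by omega, by omega, hocc⟩

end LinearRecurrence

section MorseHedlund

variable {X : ℕ → A}

def UniqueRightExt (X : ℕ → A) (n : ℕ) : Prop :=
  ∀ q q', word X q n = word X q' n → X (q + n) = X (q' + n)

lemma take_word (X : ℕ → A) (q n : ℕ) : (word X q (n + 1)).take n = word X q n := by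
  simp [word_append, word_one]

lemma ncard_factorSet_lt_of_not_uniqueRightExt {n : ℕ} (hfin : (factorSet X (n + 1)).Finite)
    (h : ¬ UniqueRightExt X n) : (factorSet X n).ncard < (factorSet X (n + 1)).ncard := by
  have himage : factorSet X n = List.take n '' factorSet X (n + 1) := by
    rw [factorSet, factorSet, ← Set.range_comp]
    simp only [Function.comp_def, take_word]
  rw [himage]
  refine lt_of_le_of_ne (Set.ncard_image_le hfin) fun heq => h fun q q' hqq' => ?_
  have hw := Set.injOn_of_ncard_image_eq heq hfin ⟨q, rfl⟩ ⟨q', rfl⟩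
    (by simp only [take_word, hqq'])
  simp only [word_append, word_one, hqq'] at hw
  simpa using hw

lemma exists_uniqueRightExt (hfin : (Set.range X).Finite) {p : ℕ}
    (hp : (factorSet X p).ncard ≤ p) : ∃ n, UniqueRightExt X n := by
  by_contra! h
  have hgrow : ∀ n, n + 1 ≤ (factorSet X n).ncard := fun n => by
    induction n with
    | zero => simp [factorSet, word]
    | succ n ih =>
      have := ncard_factorSet_lt_of_not_uniqueRightExt (finite_factorSet hfin _) (h n)
      omega
  have := hgrow p
  omega

lemma UniqueRightExt.ultPeriodic {n : ℕ} (h : UniqueRightExt X n) {q₁ q₂ : ℕ} (hlt : q₁ < q₂)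
    (heq : word X q₁ n = word X q₂ n) : UltPeriodic X := by
  have hshift : ∀ t, word X (q₁ + t) n = word X (q₂ + t) n := fun t => by
    induction t with
    | zero => simpa using heq
    | succ t ih =>
      have hext : word X (q₁ + t) (n + 1) = word X (q₂ + t) (n + 1) := by
        rw [word_append, word_append, word_one, word_one, ih, h _ _ ih]
      simpa [Nat.add_assoc, Nat.add_comm 1 n] using
        word_add_eq_of_word_eq hext (s := 1) (n := n) (by omega)
  refine ⟨q₁ + n, q₂ - q₁, by omega, fun m hm => ?_⟩
  have := h _ _ (hshift (m - n - q₁))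
  rwa [show q₁ + (m - n - q₁) + n = m by omega,
    show q₂ + (m - n - q₁) + n = m + (q₂ - q₁) by omega, eq_comm] at this

/-- The Morse–Hedlund theorem. -/
theorem ultPeriodic_of_ncard_factorSet_le (hfin : (Set.range X).Finite) {p : ℕ}
    (hp : (factorSet X p).ncard ≤ p) : UltPeriodic X := by
  obtain ⟨n, hn⟩ := exists_uniqueRightExt hfin hp
  obtain ⟨q₁, q₂, hlt, heq⟩ := (finite_factorSet hfin n).exists_lt_map_eq_of_forall_mem
    (f := fun q => word X q n) fun q => Set.mem_range_self q
  exact hn.ultPeriodic hlt heq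

lemma word_add_eq_word_add_mod {i p ℓ : ℕ} (hp : 0 < p)
    (hper : ∀ t < ℓ, X (i + t + p) = X (i + t)) :
    ∀ s ≤ ℓ, word X (i + s) p = word X (i + s % p) p := by
  intro s
  induction s using Nat.strong_induction_on with
  | _ s ih =>
    intro hs
    rcases lt_or_ge s p with h | h
    · rw [Nat.mod_eq_of_lt h]
    · rw [← Nat.sub_add_cancel h, Nat.add_mod_right, ← ih (s - p) (by omega) (by omega)]
      refine word_eq_word_iff.2 fun t ht => ?_
      have := hper (s - p + t) (by omega)
      rw [show i + (s - p + p) + t = i + (s - p + t) + p by omega, this, Nat.add_assoc]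

theorem IsLinearlyRecurrent.ultPeriodic_of_periodic_stretch {K : ℕ}
    (hLR : IsLinearlyRecurrent K X) (hfin : (Set.range X).Finite) {i p ℓ : ℕ} (hp : 0 < p)
    (hKp : K * p ≤ ℓ) (hper : ∀ t < ℓ, X (i + t + p) = X (i + t)) : UltPeriodic X := by
  refine ultPeriodic_of_ncard_factorSet_le hfin (p := p) ?_
  have hsub : factorSet X p ⊆ (fun r => word X (i + r) p) '' Set.Iio p := by
    rintro _ ⟨q, rfl⟩
    obtain ⟨j, hij, hj, hw⟩ := hLR q p hp i
    refine ⟨(j - i) % p, Nat.mod_lt _ hp, ?_⟩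
    dsimp only
    rw [← hw, ← word_add_eq_word_add_mod hp hper (j - i) (by omega), Nat.add_sub_cancel' hij]
  calc (factorSet X p).ncard ≤ ((fun r => word X (i + r) p) '' Set.Iio p).ncard :=
        Set.ncard_le_ncard hsub ((Set.finite_Iio p).image _)
    _ ≤ (Set.Iio p).ncard := Set.ncard_image_le (Set.finite_Iio p)
    _ = p := Set.ncard_Iio_nat p

end MorseHedlund

section ReturnWords

variable {X : ℕ → A} {u : List A}

def ConsecOccurrences (X : ℕ → A) (u : List A) (i j : ℕ) : Prop :=
  OccursAt X u i ∧ OccursAt X u j ∧ i < j ∧ ∀ k, i < k → k < j → ¬ OccursAt X u k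

lemma mem_returnWords_iff {v : List A} :
    v ∈ ReturnWords X u ↔ ∃ i j, ConsecOccurrences X u i j ∧ v = word X i (j - i) := by
  simp only [ReturnWords, ConsecOccurrences, Set.mem_ofPred_eq, and_assoc]

lemma ConsecOccurrences.right_unique {i j j' : ℕ} (h : ConsecOccurrences X u i j)
    (h' : ConsecOccurrences X u i j') : j = j' :=
  le_antisymm (not_lt.1 fun hlt => h.2.2.2 j' h'.2.2.1 hlt h'.2.1)
    (not_lt.1 fun hlt => h'.2.2.2 j h.2.2.1 hlt h.2.1)

lemma occursAt_add_iff {i j L s : ℕ} (h : word X i L = word X j L) (hs : s + u.length ≤ L) :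
    OccursAt X u (i + s) ↔ OccursAt X u (j + s) := by
  simp only [OccursAt, word_add_eq_of_word_eq h hs]

lemma ConsecOccurrences.shift {i j q : ℕ} (hc : ConsecOccurrences X u i j)
    (h : word X i (j - i + u.length) = word X q (j - i + u.length)) :
    ConsecOccurrences X u q (q + (j - i)) := by
  obtain ⟨hi, hj, hij, hnone⟩ := hc
  have hocc : ∀ s ≤ j - i, (OccursAt X u (i + s) ↔ OccursAt X u (q + s)) :=
    fun s hs => occursAt_add_iff h (by omega)
  refine ⟨by simpa using (hocc 0 (by omega)).1 hi, ?_, by omega, fun k hqk hkj hk => ?_⟩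
  · exact (hocc _ le_rfl).1 (by rwa [Nat.add_sub_cancel' hij.le])
  · refine hnone (i + (k - q)) (by omega) (by omega) ((hocc _ (by omega)).2 ?_)
    rwa [Nat.add_sub_cancel' hqk.le]

variable {K : ℕ}

lemma IsLinearlyRecurrent.lt_mul_sub (hLR : IsLinearlyRecurrent K X)
    (hfin : (Set.range X).Finite) (hnp : ¬ UltPeriodic X) {i j : ℕ} (hi : OccursAt X u i)
    (hj : OccursAt X u j) (hij : i < j) : u.length < K * (j - i) := by
  by_contra! h
  refine hnp (hLR.ultPeriodic_of_periodic_stretch hfin (i := i) (by omega) h fun t ht => ?_)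
  rw [word_eq_word_iff.1 (Eq.trans hi (Eq.symm hj)) t ht]
  congr 1
  omega

lemma IsLinearlyRecurrent.sub_le (hLR : IsLinearlyRecurrent K X) (hu : u ≠ []) {i j : ℕ}
    (hc : ConsecOccurrences X u i j) : j - i ≤ K * u.length := by
  obtain ⟨j', hij', hj', hw⟩ := hLR i u.length (List.length_pos_iff.2 hu) (i + 1)
  have hjj' : j ≤ j' := not_lt.1 fun h => hc.2.2.2 j' (by omega) h (hw.trans hc.1)
  have := List.length_pos_iff.2 hu
  omega

lemma IsLinearlyRecurrent.exists_consecOccurrences_le (hLR : IsLinearlyRecurrent K X)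
    (hu : u ≠ []) {v : List A} (hv : v ∈ ReturnWords X u) :
    ∃ q ≤ K * (K + 1) * u.length, ∃ j, ConsecOccurrences X u q j ∧ v = word X q (j - q) := by
  obtain ⟨i, j, hc, rfl⟩ := mem_returnWords_iff.1 hv
  have hji := hLR.sub_le hu hc
  obtain ⟨q, -, hq, hw⟩ := hLR i (j - i + u.length) (by have := hc.2.2.1; omega) 0
  have hqK : K * (j - i + u.length) ≤ K * (K + 1) * u.length := by
    rw [Nat.mul_assoc]
    exact Nat.mul_le_mul_left K (by rw [Nat.succ_mul]; omega)
  refine ⟨q, by omega, q + (j - i), hc.shift hw.symm, ?_⟩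
  rw [Nat.add_sub_cancel_left]
  simpa using (word_add_eq_of_word_eq hw (s := 0) (n := j - i) (by omega)).symm

lemma IsLinearlyRecurrent.length_returnWord_bounds (hLR : IsLinearlyRecurrent K X)
    (hfin : (Set.range X).Finite) (hnp : ¬ UltPeriodic X) (hu : u ≠ []) {v : List A}
    (hv : v ∈ ReturnWords X u) : u.length < K * v.length ∧ v.length ≤ K * u.length := by
  obtain ⟨i, j, hc, rfl⟩ := mem_returnWords_iff.1 hv
  rw [length_word]
  exact ⟨hLR.lt_mul_sub hfin hnp hc.1 hc.2.1 hc.2.2.1, hLR.sub_le hu hc⟩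

lemma ncard_le_of_forall_le_of_le_mul_sub {S : Set ℕ} {G c ℓ : ℕ} (hℓ : 0 < ℓ)
    (hG : ∀ q ∈ S, q ≤ G) (hsep : ∀ q ∈ S, ∀ q' ∈ S, q < q' → ℓ ≤ c * (q' - q)) :
    S.ncard ≤ c * G / ℓ + 1 := by
  have hmono : StrictMonoOn (fun q => c * q / ℓ) S := fun q hq q' hq' hlt => by
    have h : c * q + ℓ ≤ c * q' := by
      have := hsep q hq q' hq' hlt
      rw [Nat.mul_sub] at this
      have := Nat.mul_le_mul_left c hlt.le
      omega
    have := Nat.div_le_div_right (c := ℓ) h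
    rw [Nat.add_div_right _ hℓ] at this
    exact this
  calc S.ncard ≤ (Set.Iic (c * G / ℓ)).ncard :=
        Set.ncard_le_ncard_of_injOn _
          (fun q hq => Nat.div_le_div_right (Nat.mul_le_mul_left c (hG q hq))) hmono.injOn
    _ = c * G / ℓ + 1 := Set.ncard_Iic_nat _

lemma IsLinearlyRecurrent.ncard_returnWords_le (hLR : IsLinearlyRecurrent K X)
    (hfin : (Set.range X).Finite) (hnp : ¬ UltPeriodic X) (hu : u ≠ []) :
    (ReturnWords X u).ncard ≤ K * K * (K + 1) + 1 := by
  have hℓ : 0 < u.length := List.length_pos_iff.2 hu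
  choose! f hfG hf using fun v (hv : v ∈ ReturnWords X u) =>
    hLR.exists_consecOccurrences_le hu hv
  have hinj : Set.InjOn f (ReturnWords X u) := fun v hv v' hv' hvv' => by
    obtain ⟨j, hc, hvj⟩ := hf v hv
    obtain ⟨j', hc', hvj'⟩ := hf v' hv'
    rw [hvv'] at hc hvj
    rw [hvj, hc.right_unique hc']
    exact hvj'.symm
  calc (ReturnWords X u).ncard
      ≤ {q | q ≤ K * (K + 1) * u.length ∧ OccursAt X u q}.ncard :=
        Set.ncard_le_ncard_of_injOn f
          (fun v hv => ⟨hfG v hv, by obtain ⟨j, hc, -⟩ := hf v hv; exact hc.1⟩) hinj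
          ((Set.finite_Iic _).subset fun q hq => hq.1)
    _ ≤ K * (K * (K + 1) * u.length) / u.length + 1 :=
        ncard_le_of_forall_le_of_le_mul_sub hℓ (fun q hq => hq.1)
          fun q hq q' hq' hlt => (hLR.lt_mul_sub hfin hnp hq.2 hq'.2 hlt).le
    _ = K * K * (K + 1) + 1 := by
        rw [← Nat.mul_assoc, ← Nat.mul_assoc, Nat.mul_div_cancel _ hℓ]

end ReturnWords

theorem stmt7_general {A C : Type*} [Fintype C] (τ : C → List C) (Y : ℕ → C)
    (hprim : Primitive τ) (hfix : IsFixedPt τ Y)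
    (φ : C → A) (X : ℕ → A) (hX : ∀ n, X n = φ (Y n))
    (hnp : ¬ UltPeriodic X) :
    ∃ H₁ H₂ H₃ : ℝ, 0 < H₁ ∧ 0 < H₂ ∧ 0 < H₃ ∧
      ∀ u : List A, u ≠ [] → IsPrefix X u →
        (∀ v ∈ ReturnWords X u,
          H₁ * u.length ≤ v.length ∧ (v.length : ℝ) ≤ H₂ * u.length) ∧
        ((ReturnWords X u).ncard : ℝ) ≤ H₃ := by
  obtain rfl : X = φ ∘ Y := funext hX
  obtain ⟨K, hKY⟩ := hfix.exists_isLinearlyRecurrent hprim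
  have hLR := hKY.comp φ
  have hfin : (Set.range (φ ∘ Y)).Finite :=
    (Set.finite_range φ).subset (Set.range_comp_subset_range Y φ)
  have hK : (0 : ℝ) < K := by exact_mod_cast hLR.one_le
  refine ⟨1 / K, K, K * K * (K + 1) + 1, by positivity, hK, by positivity,
    fun u hu _ => ⟨fun v hv => ?_, by exact_mod_cast hLR.ncard_returnWords_le hfin hnp hu⟩⟩
  obtain ⟨hlo, hhi⟩ := hLR.length_returnWord_bounds hfin hnp hu hv
  constructor
  · rw [one_div_mul_eq_div, div_le_iff₀ hK, mul_comm]
    exact_mod_cast hlo.le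
  · exact_mod_cast hhi

theorem stmt7 {A C : Type*} [Fintype C] (τ : C → List C) (a : C) (Y : ℕ → C)
    (hne : Nonerasing τ) (hhead : (τ a).head? = some a) (hprim : Primitive τ)
    (hY0 : Y 0 = a) (hfix : IsFixedPt τ Y)
    (φ : C → A) (X : ℕ → A) (hX : ∀ n, X n = φ (Y n))
    (hnp : ¬ UltPeriodic X) :
    ∃ H₁ H₂ H₃ : ℝ, 0 < H₁ ∧ 0 < H₂ ∧ 0 < H₃ ∧
      ∀ u : List A, u ≠ [] → IsPrefix X u →
        (∀ v ∈ ReturnWords X u,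
          H₁ * u.length ≤ v.length ∧ (v.length : ℝ) ≤ H₂ * u.length) ∧
        ((ReturnWords X u).ncard : ℝ) ≤ H₃ :=
  stmt7_general τ Y hprim hfix φ X hX hnp

end Cobham
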